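/- Let x1, ..., x_{k-1} be distinct elements of [n] and b ∈ [n] \ {x1,...,x_{k-1}}. Let σ = (x_{k-1} z_{k-1})···(x1 z1) where each z_i ∈ [n] \ {x_i,...,x_{k-1}}. If some z_i equals b, then σ(b) ∈ {x1,...,x_{k-1}}. -/

import Mathlib

/-!
Follow `b` through the swaps `(x₁ z₁), (x₂ z₂), …` in the order they are applied. Since `b` is
none of the `xⱼ`, it stays put until the first swap with `zᵢ = b`, which sends it to `xᵢ`. From
then on the current point is some `xⱼ` with `j` smaller than the index of the next swap
`(xₖ zₖ)`; injectivity gives `xⱼ ≠ xₖ`, so that swap either fixes `xⱼ` or sends it to `xₖ`.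
-/

namespace Equiv.Perm

variable {α : Type*} [DecidableEq α]

def swapProd {m : ℕ} (x z : Fin m → α) : Perm α :=
  ((List.ofFn fun i => swap (x i) (z i)).reverse).prod

theorem swapProd_succ {m : ℕ} (x z : Fin (m + 1) → α) :
    swapProd x z = swap (x (Fin.last m)) (z (Fin.last m)) *
      swapProd (fun i => x i.castSucc) (fun i => z i.castSucc) := by
  rw [swapProd, List.ofFn_succ', List.concat_eq_append, List.reverse_append]
  rfl

theorem swapProd_apply_of_forall_ne {m : ℕ} (x z : Fin m → α) {b : α}
    (hb : b ∉ Set.range x) (hzb : ∀ i, z i ≠ b) : swapProd x z b = b := by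
  induction m with
  | zero => rfl
  | succ m ih =>
    rw [swapProd_succ, mul_apply,
      ih _ _ (fun ⟨i, hi⟩ => hb ⟨i.castSucc, hi⟩) (fun i => hzb i.castSucc)]
    exact swap_apply_of_ne_of_ne (fun h => hb ⟨_, h.symm⟩) (fun h => hzb _ h.symm)

theorem swapProd_apply_mem_range {m : ℕ} {x : Fin m → α} (hx : Function.Injective x)
    (z : Fin m → α) {b : α} (hb : b ∉ Set.range x) (hzb : ∃ i, z i = b) :
    swapProd x z b ∈ Set.range x := by
  induction m with
  | zero => exact hzb.elim fun i _ => i.elim0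
  | succ m ih =>
    rw [swapProd_succ, mul_apply]
    by_cases hprefix : ∃ i : Fin m, z i.castSucc = b
    · obtain ⟨j, hj⟩ : ∃ j : Fin m,
          x j.castSucc = swapProd (fun i => x i.castSucc) (fun i => z i.castSucc) b :=
        ih (hx.comp (Fin.castSucc_injective m)) _ (fun ⟨i, hi⟩ => hb ⟨i.castSucc, hi⟩) hprefix
      rw [← hj]
      by_cases hjz : x j.castSucc = z (Fin.last m)
      · rw [hjz, swap_apply_right]
        exact ⟨_, rfl⟩
      · have hjx : x j.castSucc ≠ x (Fin.last m) := hx.ne (Fin.castSucc_lt_last j).ne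
        rw [swap_apply_of_ne_of_ne hjx hjz]
        exact ⟨_, rfl⟩
    · simp only [not_exists] at hprefix
      obtain ⟨i, hi⟩ := hzb
      have hlast : z (Fin.last m) = b := by
        induction i using Fin.lastCases with
        | last => exact hi
        | cast j => exact absurd hi (hprefix j)
      rw [swapProd_apply_of_forall_ne _ _ (fun ⟨i, hi⟩ => hb ⟨i.castSucc, hi⟩) hprefix,
        ← hlast, swap_apply_right]
      exact ⟨_, rfl⟩

end Equiv.Perm

theorem stmt12_general (n m : ℕ) (x z : Fin m → Fin n) (hx : Function.Injective x)
    (b : Fin n) (hb : b ∉ Set.range x)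
    (hzb : ∃ i : Fin m, z i = b) :
    ((List.ofFn fun i => Equiv.swap (x i) (z i)).reverse).prod b ∈ Set.range x :=
  Equiv.Perm.swapProd_apply_mem_range hx z hb hzb

/-- For distinct x1,...,x_{k-1}, b outside them, and
σ = (x_{k-1} z_{k-1})···(x1 z1) with z_i ∉ {x_i,...,x_{k-1}}:
if some z_i = b then σ(b) ∈ {x1,...,x_{k-1}}. -/
theorem stmt12 (n m : ℕ) (x z : Fin m → Fin n) (hx : Function.Injective x)
    (b : Fin n) (hb : b ∉ Set.range x)
    (hz : ∀ i j : Fin m, i ≤ j → z i ≠ x j)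
    (hzb : ∃ i : Fin m, z i = b) :
    ((List.ofFn fun i => Equiv.swap (x i) (z i)).reverse).prod b ∈ Set.range x :=
  stmt12_general n m x z hx b hb hzb
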